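/- An oriented graph is a Q-graph if and only if it is a global Q-graph. -/

import Mathlib

namespace PluralCuts

/-- The two horizontal directions: west and east. -/
inductive XDir : Type
  | W
  | E
deriving DecidableEq

/-- The two vertical directions: north and south. -/
inductive YDir : Type
  | N
  | S
deriving DecidableEq

/-- The other element of `{W, E}`. -/
def XDir.other : XDir → XDir
  | .W => .E
  | .E => .W

/-- A helper choosing between two values according to an `XDir`. -/
def pick {α : Type*} (w e : α) : XDir → α
  | .W => w
  | .E => e

/-- A digraph on (a finite set of) natural-number vertices: a finite set of
vertices together with a finite set of edges (ordered pairs). -/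
structure DG : Type where
  verts : Finset ℕ
  edges : Finset (ℕ × ℕ)

namespace DG

/-- `D` is an oriented graph: edges lie between vertices, the edge relation is
irreflexive and antisymmetric, and the vertex set is nonempty. -/
def IsOriented (D : DG) : Prop :=
  (∀ e ∈ D.edges, e.1 ∈ D.verts ∧ e.2 ∈ D.verts) ∧
  (∀ e ∈ D.edges, e.1 ≠ e.2) ∧
  (∀ a b : ℕ, (a, b) ∈ D.edges → (b, a) ∉ D.edges) ∧
  D.verts.Nonempty

/-- A `W`-vertex: no edge ends in it. -/
def isWVert (D : DG) (a : ℕ) : Prop := a ∈ D.verts ∧ ∀ b, (b, a) ∉ D.edges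

/-- An `E`-vertex: no edge begins in it. -/
def isEVert (D : DG) (a : ℕ) : Prop := a ∈ D.verts ∧ ∀ b, (a, b) ∉ D.edges

/-- An inner vertex: some edge ends in it and some edge begins in it. -/
def isInner (D : DG) (a : ℕ) : Prop :=
  a ∈ D.verts ∧ (∃ b, (b, a) ∈ D.edges) ∧ (∃ b, (a, b) ∈ D.edges)

/-- A `W`-edge: an edge beginning in a `W`-vertex. -/
def isWEdge (D : DG) (e : ℕ × ℕ) : Prop := e ∈ D.edges ∧ D.isWVert e.1

/-- An `E`-edge: an edge ending in an `E`-vertex. -/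
def isEEdge (D : DG) (e : ℕ × ℕ) : Prop := e ∈ D.edges ∧ D.isEVert e.2

/-- An `X`-edge, for `X ∈ {W, E}`. -/
def isXEdge (D : DG) : XDir → (ℕ × ℕ) → Prop
  | .W => D.isWEdge
  | .E => D.isEEdge

/-- An inner edge: it begins and ends in inner vertices. -/
def isInnerEdge (D : DG) (e : ℕ × ℕ) : Prop :=
  e ∈ D.edges ∧ D.isInner e.1 ∧ D.isInner e.2

/-- A functional `W`-edge `(a,b)`: `(a,c) ∈ D` implies `b = c`. -/
def funcWEdge (D : DG) (e : ℕ × ℕ) : Prop :=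
  D.isWEdge e ∧ ∀ c, (e.1, c) ∈ D.edges → c = e.2

/-- A functional `E`-edge `(b,a)`: `(c,a) ∈ D` implies `b = c`. -/
def funcEEdge (D : DG) (e : ℕ × ℕ) : Prop :=
  D.isEEdge e ∧ ∀ c, (c, e.2) ∈ D.edges → c = e.1

/-- `D` is `W`-`E`-functional: all its `W`-edges and `E`-edges are functional. -/
def WEFunctional (D : DG) : Prop :=
  (∀ e, D.isWEdge e → D.funcWEdge e) ∧ (∀ e, D.isEEdge e → D.funcEEdge e)

/-- Semi-adjacency: `(a,b)` or `(b,a)` is an edge. -/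
def semiAdj (D : DG) (a b : ℕ) : Prop := (a, b) ∈ D.edges ∨ (b, a) ∈ D.edges

/-- A semipath: a nonempty sequence of mutually distinct vertices in which any
two consecutive vertices are semi-adjacent. -/
def IsSemipath (D : DG) (l : List ℕ) : Prop :=
  l ≠ [] ∧ (∀ a ∈ l, a ∈ D.verts) ∧ l.Nodup ∧ l.Chain' D.semiAdj

/-- A path: a nonempty sequence of mutually distinct vertices in which
`(a_i, a_{i+1})` is an edge for consecutive vertices. -/
def IsPath (D : DG) (l : List ℕ) : Prop :=
  l ≠ [] ∧ (∀ a ∈ l, a ∈ D.verts) ∧ l.Nodup ∧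
    l.Chain' (fun a b => (a, b) ∈ D.edges)

/-- A semicycle: a sequence `a_1, ..., a_n` of vertices with `n ≥ 4`,
`a_1 = a_n`, `a_1, ..., a_{n-1}` mutually distinct, and consecutive vertices
semi-adjacent. -/
def IsSemicycle (D : DG) (l : List ℕ) : Prop :=
  4 ≤ l.length ∧ (∀ a ∈ l, a ∈ D.verts) ∧ l.head? = l.getLast? ∧
  l.dropLast.Nodup ∧ l.Chain' D.semiAdj

/-- `D` is weakly connected: every two vertices are joined by a semipath. -/
def WeaklyConnected (D : DG) : Prop :=
  ∀ a ∈ D.verts, ∀ b ∈ D.verts,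
    ∃ l, D.IsSemipath l ∧ l.head? = some a ∧ l.getLast? = some b

/-- `D` is asemicyclic: it has no semicycles. -/
def Asemicyclic (D : DG) : Prop := ∀ l, ¬ D.IsSemicycle l

/-- The cut `D_W[e_W - e_E]D_E`:
`(D_W - {e_W}) ∪ (D_E - {e_E}) ∪ {(e_W.1, e_E.2)}` on the union of the vertex
sets with `e_W.2` and `e_E.1` omitted. -/
def cut (DW DE : DG) (eW eE : ℕ × ℕ) : DG where
  verts := (DW.verts ∪ DE.verts) \ {eW.2, eE.1}
  edges := insert (eW.1, eE.2) ((DW.edges.erase eW) ∪ (DE.edges.erase eE))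

end DG

/-- The type of assignments of four distinguished edges `NW, SW, NE, SE`. -/
abbrev DistE : Type := YDir → XDir → ℕ × ℕ

/-- The type of labellings assigning to (inner) vertices four edges. -/
abbrev Lab : Type := ℕ → YDir → XDir → ℕ × ℕ

/-- `⟨D, ε⟩` is a basic K-graph: `D` is an oriented graph with a single inner
vertex `b`, all edges begin or end in `b`, every other vertex is joined to `b`
by an edge, there is at least one edge ending in `b` and one beginning in `b`,
the distinguished edges `ε Y W` end in `b` and `ε Y E` begin in `b`, and
(XYB): if there are at least two `X`-edges then `NX ≠ SX`. -/
def IsBasicK (D : DG) (ε : DistE) : Prop :=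
  D.IsOriented ∧
  ∃ b ∈ D.verts,
    (∀ e ∈ D.edges, e.1 = b ∨ e.2 = b) ∧
    (∀ v ∈ D.verts, v = b ∨ (v, b) ∈ D.edges ∨ (b, v) ∈ D.edges) ∧
    (∃ a, (a, b) ∈ D.edges) ∧ (∃ c, (b, c) ∈ D.edges) ∧
    (∀ Y : YDir, ε Y XDir.W ∈ D.edges ∧ (ε Y XDir.W).2 = b ∧
      ε Y XDir.E ∈ D.edges ∧ (ε Y XDir.E).1 = b) ∧
    (2 ≤ (D.edges.filter (fun e => e.2 = b)).card →
      ε YDir.N XDir.W ≠ ε YDir.S XDir.W) ∧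
    (2 ≤ (D.edges.filter (fun e => e.1 = b)).card →
      ε YDir.N XDir.E ≠ ε YDir.S XDir.E)

/-- `⟨D, ε⟩` is a basic Q-graph: as a basic K-graph but with no requirement
(XYB) on the distinguished edges. -/
def IsBasicQ (D : DG) (ε : DistE) : Prop :=
  D.IsOriented ∧
  ∃ b ∈ D.verts,
    (∀ e ∈ D.edges, e.1 = b ∨ e.2 = b) ∧
    (∀ v ∈ D.verts, v = b ∨ (v, b) ∈ D.edges ∨ (b, v) ∈ D.edges) ∧
    (∃ a, (a, b) ∈ D.edges) ∧ (∃ c, (b, c) ∈ D.edges) ∧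
    (∀ Y : YDir, ε Y XDir.W ∈ D.edges ∧ (ε Y XDir.W).2 = b ∧
      ε Y XDir.E ∈ D.edges ∧ (ε Y XDir.E).1 = b)

/-- Finite binary trees whose nodes carry an oriented graph, four
distinguished edges, and (at internal nodes) the two cut edges. -/
inductive CTree : Type
  | leaf (D : DG) (ε : DistE)
  | node (D : DG) (ε : DistE) (eW eE : ℕ × ℕ) (l r : CTree)

namespace CTree

/-- The graph at the root of the tree. -/
def rootGraph : CTree → DG
  | .leaf D _ => D
  | .node D _ _ _ _ _ => D

/-- The distinguished edges at the root of the tree. -/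
def dist : CTree → DistE
  | .leaf _ ε => ε
  | .node _ ε _ _ _ _ => ε

/-- The list of graphs-with-distinguished-edges at the leaves of the tree
(the basic K-graphs determining the leaves of a construction). -/
def leaves : CTree → List (DG × DistE)
  | .leaf D ε => [(D, ε)]
  | .node _ _ _ _ l r => l.leaves ++ r.leaves

end CTree

/-- The tree `G_W[e_W - e_E]G_E`, whose root graph is the cut of the root
graphs and whose distinguished edges are given by (XYD). -/
def mkNode (GW GE : CTree) (eW eE : ℕ × ℕ) : CTree :=
  .node (DG.cut GW.rootGraph GE.rootGraph eW eE)
    (fun Y X =>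
      match X with
      | .W => if eE = GE.dist Y XDir.W then GW.dist Y XDir.W else GE.dist Y XDir.W
      | .E => if eW = GW.dist Y XDir.E then GE.dist Y XDir.E else GW.dist Y XDir.E)
    eW eE GW GE

/-- The inductive notion of construction (of a global K-graph). -/
inductive IsConstruction : CTree → Prop
  | leaf (D : DG) (ε : DistE) (h : IsBasicK D ε) : IsConstruction (.leaf D ε)
  | node (D : DG) (ε : DistE) (eW eE : ℕ × ℕ) (GW GE : CTree)
      (hW : IsConstruction GW) (hE : IsConstruction GE)
      (hdisj : Disjoint GW.rootGraph.verts GE.rootGraph.verts)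
      (heW : GW.rootGraph.funcEEdge eW)
      (heE : GE.rootGraph.funcWEdge eE)
      (hD : D = DG.cut GW.rootGraph GE.rootGraph eW eE)
      (hXYC : ∀ Y : YDir, eW = GW.dist Y XDir.E ∨ eE = GE.dist Y XDir.W)
      (hεW : ∀ Y : YDir, ε Y XDir.W =
        if eE = GE.dist Y XDir.W then GW.dist Y XDir.W else GE.dist Y XDir.W)
      (hεE : ∀ Y : YDir, ε Y XDir.E =
        if eW = GW.dist Y XDir.E then GE.dist Y XDir.E else GW.dist Y XDir.E) :
      IsConstruction (.node D ε eW eE GW GE)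

/-- The inductive notion of construction of a global Q-graph: as
`IsConstruction` but with basic Q-graphs at the leaves. -/
inductive IsConstructionQ : CTree → Prop
  | leaf (D : DG) (ε : DistE) (h : IsBasicQ D ε) : IsConstructionQ (.leaf D ε)
  | node (D : DG) (ε : DistE) (eW eE : ℕ × ℕ) (GW GE : CTree)
      (hW : IsConstructionQ GW) (hE : IsConstructionQ GE)
      (hdisj : Disjoint GW.rootGraph.verts GE.rootGraph.verts)
      (heW : GW.rootGraph.funcEEdge eW)
      (heE : GE.rootGraph.funcWEdge eE)
      (hD : D = DG.cut GW.rootGraph GE.rootGraph eW eE)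
      (hXYC : ∀ Y : YDir, eW = GW.dist Y XDir.E ∨ eE = GE.dist Y XDir.W)
      (hεW : ∀ Y : YDir, ε Y XDir.W =
        if eE = GE.dist Y XDir.W then GW.dist Y XDir.W else GE.dist Y XDir.W)
      (hεE : ∀ Y : YDir, ε Y XDir.E =
        if eW = GW.dist Y XDir.E then GE.dist Y XDir.E else GW.dist Y XDir.E) :
      IsConstructionQ (.node D ε eW eE GW GE)

/-- ρ-equivalence of constructions: the least equivalence relation containing
ρ1, ρ2, ρ3 and closed under congruence with respect to cuts. -/
inductive RhoEquiv : CTree → CTree → Prop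
  | rho1 (P Q R : CTree) (eW eE fW fE : ℕ × ℕ)
      (hP : IsConstruction P) (hQ : IsConstruction Q) (hR : IsConstruction R)
      (heW : P.rootGraph.isEEdge eW) (hfW : Q.rootGraph.isEEdge fW)
      (heE : Q.rootGraph.isWEdge eE) (hfE : R.rootGraph.isWEdge fE)
      (h1 : IsConstruction (mkNode (mkNode P Q eW eE) R fW fE))
      (h2 : IsConstruction (mkNode P (mkNode Q R fW fE) eW eE)) :
      RhoEquiv (mkNode (mkNode P Q eW eE) R fW fE)
               (mkNode P (mkNode Q R fW fE) eW eE)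
  | rho2 (P Q R : CTree) (eW eE fW fE : ℕ × ℕ)
      (hP : IsConstruction P) (hQ : IsConstruction Q) (hR : IsConstruction R)
      (heW : P.rootGraph.isEEdge eW) (hfW : P.rootGraph.isEEdge fW)
      (hne : eW ≠ fW)
      (heE : Q.rootGraph.isWEdge eE) (hfE : R.rootGraph.isWEdge fE)
      (h1 : IsConstruction (mkNode (mkNode P Q eW eE) R fW fE))
      (h2 : IsConstruction (mkNode (mkNode P R fW fE) Q eW eE)) :
      RhoEquiv (mkNode (mkNode P Q eW eE) R fW fE)
               (mkNode (mkNode P R fW fE) Q eW eE)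
  | rho3 (P Q R : CTree) (eW eE fW fE : ℕ × ℕ)
      (hP : IsConstruction P) (hQ : IsConstruction Q) (hR : IsConstruction R)
      (heE : P.rootGraph.isWEdge eE) (hfE : P.rootGraph.isWEdge fE)
      (hne : eE ≠ fE)
      (heW : Q.rootGraph.isEEdge eW) (hfW : R.rootGraph.isEEdge fW)
      (h1 : IsConstruction (mkNode R (mkNode Q P eW eE) fW fE))
      (h2 : IsConstruction (mkNode Q (mkNode R P fW fE) eW eE)) :
      RhoEquiv (mkNode R (mkNode Q P eW eE) fW fE)
               (mkNode Q (mkNode R P fW fE) eW eE)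
  | congr (G1 G2 H1 H2 : CTree) (eW eE : ℕ × ℕ)
      (h12 : RhoEquiv G1 G2) (h34 : RhoEquiv H1 H2)
      (hc1 : IsConstruction (mkNode G1 H1 eW eE))
      (hc2 : IsConstruction (mkNode G2 H2 eW eE)) :
      RhoEquiv (mkNode G1 H1 eW eE) (mkNode G2 H2 eW eE)
  | refl (G : CTree) (h : IsConstruction G) : RhoEquiv G G
  | symm {G H : CTree} (h : RhoEquiv G H) : RhoEquiv H G
  | trans {G H K : CTree} (h1 : RhoEquiv G H) (h2 : RhoEquiv H K) :
      RhoEquiv G K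

/-- The class `[G]`: all constructions with the same root graph as `G` whose
leaves are determined by the same basic K-graphs as those of `G`. -/
def classOf (G : CTree) : Set CTree :=
  {H | IsConstruction H ∧ H.rootGraph = G.rootGraph ∧
    ∀ p : DG × DistE, p ∈ H.leaves ↔ p ∈ G.leaves}

/-- Renaming the vertices of a digraph along a function. -/
def DG.rename (f : ℕ → ℕ) (D : DG) : DG where
  verts := D.verts.image f
  edges := D.edges.image (fun e => (f e.1, f e.2))

/-- Renaming the vertices throughout a tree. -/
def CTree.rename (f : ℕ → ℕ) : CTree → CTree
  | .leaf D ε => .leaf (DG.rename f D) (fun Y X => (f (ε Y X).1, f (ε Y X).2))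
  | .node D ε eW eE l r =>
      .node (DG.rename f D) (fun Y X => (f (ε Y X).1, f (ε Y X).2))
        (f eW.1, f eW.2) (f eE.1, f eE.2) (l.rename f) (r.rename f)

/-- σ-equivalence: `H` is obtained from `G` by a bijective renaming of
vertices that fixes the root vertices (so only secondary vertices may be
renamed). -/
def SigmaEquiv (G H : CTree) : Prop :=
  ∃ f : ℕ ≃ ℕ, (∀ v ∈ G.rootGraph.verts, f v = v) ∧ H = G.rename f

/-- The global compass graph `‖G‖`: all constructions σ-equivalent to a
construction in `[G]`. -/
def normClass (G : CTree) : Set CTree :=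
  {H | ∃ K ∈ classOf G, SigmaEquiv K H}

/-- The labelling `L` of `λ(G) = ⟨D, L⟩`, defined by induction on `G`: at a
leaf given by a basic K-graph with inner vertex `b`, `YX(b) = YX(B)`; at a
node, the value is inherited from the appropriate subtree unless it is one of
the two cut edges, in which case it is the new edge introduced by the cut. -/
def lamG : CTree → Lab
  | .leaf _ ε => fun _ => ε
  | .node _ _ eW eE l r => fun a Y X =>
      let v := if a ∈ l.rootGraph.verts then lamG l a Y X else lamG r a Y X
      if v = eW ∨ v = eE then (eW.1, eE.2) else v

/-- `L` assigns to every inner vertex `a` edges `L a Y W` ending in `a` and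
edges `L a Y E` beginning in `a`. -/
def ProperLab (D : DG) (L : Lab) : Prop :=
  ∀ a, D.isInner a → ∀ Y : YDir,
    L a Y XDir.W ∈ D.edges ∧ (L a Y XDir.W).2 = a ∧
    L a Y XDir.E ∈ D.edges ∧ (L a Y XDir.E).1 = a

/-- `⟨D, L⟩` separates `N` from `S`. -/
def SeparatesNS (D : DG) (L : Lab) : Prop :=
  ∀ a, D.isInner a →
    (2 ≤ (D.edges.filter (fun e => e.2 = a)).card →
      L a YDir.N XDir.W ≠ L a YDir.S XDir.W) ∧
    (2 ≤ (D.edges.filter (fun e => e.1 = a)).card →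
      L a YDir.N XDir.E ≠ L a YDir.S XDir.E)

/-- A list `a_1, ..., a_n` is `Y`-decent in `⟨D, L⟩`: `n = 1`, or
`YE(a_1) = (a_1, a_2)`, or `YW(a_n) = (a_{n-1}, a_n)`. -/
def Ydecent (L : Lab) (Y : YDir) (l : List ℕ) : Prop :=
  ∀ a b t, l = a :: b :: t →
    (L a Y XDir.E = (a, b) ∨
      ∃ c d t', l.reverse = d :: c :: t' ∧ L d Y XDir.W = (c, d))

/-- `⟨D, L⟩` is a local compass graph. -/
def IsLocalCompass (D : DG) (L : Lab) : Prop :=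
  D.IsOriented ∧ ProperLab D L ∧
  D.WeaklyConnected ∧ D.Asemicyclic ∧ D.WEFunctional ∧ (∃ a, D.isInner a) ∧
  SeparatesNS D L ∧
  (∀ l, D.IsPath l → Ydecent L YDir.N l ∧ Ydecent L YDir.S l)

/-- A path (list) covers an edge `g` when `g` is a pair of consecutive
vertices of the list. -/
def covers (l : List ℕ) (g : ℕ × ℕ) : Prop := g ∈ l.zip l.tail

/-- A `YX`-edge in `⟨D, L⟩`. -/
def YXedge (D : DG) (L : Lab) (Y : YDir) : XDir → (ℕ × ℕ) → Prop
  | .W, g => g ∈ D.edges ∧ (L g.2 Y XDir.W = g ∨ D.isEEdge g)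
  | .E, g => g ∈ D.edges ∧ (L g.1 Y XDir.E = g ∨ D.isWEdge g)

/-- A proper semipath: a semipath such that neither it nor its reverse is a
path. -/
def ProperSemipath (D : DG) (l : List ℕ) : Prop :=
  D.IsSemipath l ∧ ¬ D.IsPath l ∧ ¬ D.IsPath l.reverse

/-- A transversal edge `(a,b)`: there is a proper semipath beginning with
`a, b` and a proper semipath beginning with `b, a`. -/
def Transversal (D : DG) (e : ℕ × ℕ) : Prop :=
  e ∈ D.edges ∧
  (∃ t, ProperSemipath D (e.1 :: e.2 :: t)) ∧
  (∃ t, ProperSemipath D (e.2 :: e.1 :: t))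

/-- The edge of `D` that connects two semi-adjacent vertices `a` and `b`. -/
def connEdge (D : DG) (a b : ℕ) : ℕ × ℕ :=
  if (a, b) ∈ D.edges then (a, b) else (b, a)

/-- The connecting edges of a list: the edges connecting its consecutive
vertices. -/
def connEdges (D : DG) (l : List ℕ) (e : ℕ × ℕ) : Prop :=
  ∃ p ∈ l.zip l.tail, e = connEdge D p.1 p.2

/-- A bifurcation: three distinct edges with a common vertex. -/
def Bifurcation (D : DG) (e1 e2 e3 : ℕ × ℕ) : Prop :=
  e1 ∈ D.edges ∧ e2 ∈ D.edges ∧ e3 ∈ D.edges ∧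
  e1 ≠ e2 ∧ e1 ≠ e3 ∧ e2 ≠ e3 ∧
  ∃ v, (v = e1.1 ∨ v = e1.2) ∧ (v = e2.1 ∨ v = e2.2) ∧ (v = e3.1 ∨ v = e3.2)

/-- A K-graph: a weakly connected, asemicyclic, `W`-`E`-functional oriented
graph with an inner vertex in which no bifurcation is transversal. -/
def IsKGraph (D : DG) : Prop :=
  D.IsOriented ∧ D.WeaklyConnected ∧ D.Asemicyclic ∧ D.WEFunctional ∧
  (∃ a, D.isInner a) ∧
  ∀ e1 e2 e3, Bifurcation D e1 e2 e3 →
    ¬ (Transversal D e1 ∧ Transversal D e2 ∧ Transversal D e3)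

/-- A Q-graph: a weakly connected, asemicyclic, `W`-`E`-functional oriented
graph with an inner vertex. -/
def IsQGraph (D : DG) : Prop :=
  D.IsOriented ∧ D.WeaklyConnected ∧ D.Asemicyclic ∧ D.WEFunctional ∧
  ∃ a, D.isInner a


end PluralCuts

/-!
Both directions go through cuts. A cut of two Q-graphs along functional edges `(a, b)`, `(c, d)` is
again a Q-graph: the new edge `(a, d)` is the only link between the two sides, so it is a bridge of
the underlying simple graph, and every vertex other than `a` and `d` keeps its edges. Conversely, a
Q-graph with a single inner vertex is basic, and otherwise it has an edge `(a, d)` joining inner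
vertices. Deleting that edge leaves the component of `a` and the component of `d`; closing them off
with pendant edges `(a, b)` and `(c, d)` at fresh vertices gives two smaller Q-graphs whose cut is
the original graph. By induction on the number of vertices, each Q-graph has constructions whose
distinguished `E`-edges (or `W`-edges) all equal any prescribed functional edge, and these are
exactly what is needed to meet (XYC) at the cut.
-/

namespace SimpleGraph

variable {V : Type*} {G H G₁ G₂ : SimpleGraph V} {S : Set V} {u v w : V}

theorem Reachable.mem_of_forall_adj_mem (h : G.Reachable u v)
    (hS : ∀ x y, x ∈ S → G.Adj x y → y ∈ S) (hu : u ∈ S) : v ∈ S := by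
  rw [reachable_iff_reflTransGen] at h
  induction h with
  | refl => exact hu
  | tail _ hxy ih => exact hS _ _ ih hxy

theorem Reachable.of_forall_adj (h : H.Reachable u v)
    (hHG : ∀ x y, H.Reachable u x → H.Adj x y → G.Adj x y) : G.Reachable u v :=
  (h.mem_of_forall_adj_mem (S := {x | H.Reachable u x ∧ G.Reachable u x})
    (fun x y hx hxy => ⟨hx.1.trans hxy.reachable, hx.2.trans (hHG x y hx.1 hxy).reachable⟩)
    ⟨.rfl, .rfl⟩).2

theorem Reachable.of_pendant (h : H.Reachable u v) (hv : v ≠ w) (hw : ∀ x, H.Adj w x → x = u)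
    (hHG : ∀ x y, x ≠ w → y ≠ w → H.Adj x y → G.Adj x y) : G.Reachable u v := by
  have : v ∈ {x | x = w ∨ G.Reachable u x} :=
    h.mem_of_forall_adj_mem (fun x y hx hxy => ?_) (Or.inr .rfl)
  · exact this.resolve_left hv
  by_cases hy : y = w
  · exact Or.inl hy
  by_cases hxw : x = w
  · exact Or.inr (hw y (hxw ▸ hxy) ▸ .rfl)
  · exact Or.inr ((hx.resolve_left hxw).trans (hHG x y hxw hy hxy).reachable)

theorem Walk.edges_subset_of_forall_adj (hS : ∀ x y, x ∈ S → G.Adj x y → G₁.Adj x y ∧ y ∈ S) :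
    ∀ {u v} (p : G.Walk u v), u ∈ S → ∀ e ∈ p.edges, e ∈ G₁.edgeSet
  | _, _, .nil, _ => by simp
  | _, _, .cons h p, hu => by
    obtain ⟨h₁, hv⟩ := hS _ _ hu h
    simp only [Walk.edges_cons, List.mem_cons, forall_eq_or_imp]
    exact ⟨h₁, edges_subset_of_forall_adj hS p hv⟩

theorem IsAcyclic.sup_of_separated (h₁ : G₁.IsAcyclic) (h₂ : G₂.IsAcyclic)
    (hS₁ : ∀ x y, G₁.Adj x y → x ∈ S) (hS₂ : ∀ x y, G₂.Adj x y → x ∉ S) :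
    (G₁ ⊔ G₂).IsAcyclic := by
  intro v c hc
  by_cases hv : v ∈ S
  · refine h₁ _ (hc.transfer (c.edges_subset_of_forall_adj (fun x y hx hxy => ?_) hv))
    have h : G₁.Adj x y := hxy.resolve_right fun h => hS₂ x y h hx
    exact ⟨h, hS₁ y x h.symm⟩
  · refine h₂ _ (hc.transfer (c.edges_subset_of_forall_adj (S := Sᶜ) (fun x y hx hxy => ?_) hv))
    have h : G₂.Adj x y := hxy.resolve_left fun h => hx (hS₁ x y h)
    exact ⟨h, hS₂ y x h.symm⟩

theorem not_reachable_sup_of_separated (hS₁ : ∀ x y, G₁.Adj x y → x ∈ S)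
    (hS₂ : ∀ x y, G₂.Adj x y → x ∉ S) (hu : u ∈ S) (hv : v ∉ S) : ¬ (G₁ ⊔ G₂).Reachable u v :=
  fun h => hv <| h.mem_of_forall_adj_mem (fun x y hx hxy =>
    hS₁ y x (hxy.resolve_right fun h => hS₂ x y h hx).symm) hu

end SimpleGraph

namespace PluralCuts

open SimpleGraph

variable {D D' DW DE : DG} {S : Finset ℕ} {ε : DistE} {e eW eE g : ℕ × ℕ}
  {a b c d p q u v x y z : ℕ}

namespace DG

/-! ### The underlying simple graph -/

def graph (D : DG) : SimpleGraph ℕ := SimpleGraph.fromRel fun a b => (a, b) ∈ D.edges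

theorem graph_adj : D.graph.Adj u v ↔ u ≠ v ∧ D.semiAdj u v := fromRel_adj _ _ _

theorem mem_verts_of_graph_adj (hV : ∀ e ∈ D.edges, e.1 ∈ D.verts ∧ e.2 ∈ D.verts)
    (h : D.graph.Adj u v) : u ∈ D.verts := by
  rcases (graph_adj.1 h).2 with h | h
  exacts [(hV _ h).1, (hV _ h).2]

theorem mem_verts_of_reachable (hV : ∀ e ∈ D.edges, e.1 ∈ D.verts ∧ e.2 ∈ D.verts)
    (h : D.graph.Reachable u v) (hu : u ∈ D.verts) : v ∈ D.verts :=
  h.mem_of_forall_adj_mem (S := ↑D.verts)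
    (fun _ _ _ hxy => mem_verts_of_graph_adj hV hxy.symm) hu

theorem eq_of_reachable_of_not_mem_verts (hV : ∀ e ∈ D.edges, e.1 ∈ D.verts ∧ e.2 ∈ D.verts)
    (hu : u ∉ D.verts) (h : D.graph.Reachable u v) : v = u :=
  h.mem_of_forall_adj_mem (S := {u}) (fun _ _ hx hxy =>
    absurd (hx ▸ mem_verts_of_graph_adj hV hxy) hu) rfl

theorem support_subset_verts (hV : ∀ e ∈ D.edges, e.1 ∈ D.verts ∧ e.2 ∈ D.verts)
    (p : D.graph.Walk u v) (hu : u ∈ D.verts) : ∀ x ∈ p.support, x ∈ D.verts :=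
  fun x hx => mem_verts_of_reachable hV ⟨p.takeUntil x hx⟩ hu

theorem reachable_of_reflTransGen (h : Relation.ReflTransGen D.semiAdj u v) :
    D.graph.Reachable u v := by
  induction h with
  | refl => rfl
  | @tail x y _ hxy ih =>
    refine ih.trans ?_
    by_cases h : x = y
    · rw [h]
    · exact (graph_adj.2 ⟨h, hxy⟩).reachable

theorem isChain_graph_adj {l : List ℕ} (hch : l.IsChain D.semiAdj) (hnd : l.Nodup) :
    l.IsChain D.graph.Adj := by
  rw [List.isChain_iff_forall_rel_of_append_cons_cons] at hch ⊢
  intro a b l₁ l₂ hl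
  refine graph_adj.2 ⟨?_, hch hl⟩
  rintro rfl
  rw [hl] at hnd
  exact (List.nodup_cons.1 (List.nodup_append.1 hnd).2.1).1 List.mem_cons_self

theorem isSemipath_support (hV : ∀ e ∈ D.edges, e.1 ∈ D.verts ∧ e.2 ∈ D.verts)
    {p : D.graph.Walk u v} (hp : p.IsPath) (hu : u ∈ D.verts) : D.IsSemipath p.support :=
  ⟨p.support_ne_nil, support_subset_verts hV p hu, hp.support_nodup,
    p.isChain_adj_support.imp fun _ _ h => (graph_adj.1 h).2⟩

theorem weaklyConnected_iff (hV : ∀ e ∈ D.edges, e.1 ∈ D.verts ∧ e.2 ∈ D.verts) :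
    D.WeaklyConnected ↔ ∀ u ∈ D.verts, ∀ v ∈ D.verts, D.graph.Reachable u v := by
  refine ⟨fun h u hu v hv => ?_, fun h u hu v hv => ?_⟩
  · obtain ⟨l, ⟨hne, -, -, hch⟩, hh, hl⟩ := h u hu v hv
    rw [List.head?_eq_some_head hne, Option.some_inj] at hh
    rw [List.getLast?_eq_some_getLast hne, Option.some_inj] at hl
    exact hh ▸ hl ▸ reachable_of_reflTransGen
      (List.relationReflTransGen_of_exists_isChain l hch hne)
  · obtain ⟨p, hp⟩ := (h u hu v hv).exists_isPath
    refine ⟨p.support, isSemipath_support hV hp hu, ?_, ?_⟩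
    · rw [List.head?_eq_some_head p.support_ne_nil, p.head_support]
    · rw [List.getLast?_eq_some_getLast p.support_ne_nil, p.getLast_support]

theorem isSemicycle_support (hV : ∀ e ∈ D.edges, e.1 ∈ D.verts ∧ e.2 ∈ D.verts)
    {c : D.graph.Walk v v} (hc : c.IsCycle) : D.IsSemicycle c.support := by
  refine ⟨?_, ?_, ?_, hc.nodup_dropLast_support, c.isChain_adj_support.imp fun _ _ h =>
    (graph_adj.1 h).2⟩
  · have := hc.three_le_length
    rw [c.length_support]
    omega
  · cases c with
    | nil => exact absurd hc (by simp)
    | cons h p => exact support_subset_verts hV _ (mem_verts_of_graph_adj hV h)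
  · rw [List.head?_eq_some_head c.support_ne_nil, List.getLast?_eq_some_getLast c.support_ne_nil,
      c.head_support, c.getLast_support]

/-- A semicycle `x, y, …, x` is the support of the cycle made of the edge `x y` followed by the
path `y, …, x`. -/
theorem not_isAcyclic_of_isSemicycle {l : List ℕ} (hl : D.IsSemicycle l) : ¬ D.graph.IsAcyclic := by
  obtain ⟨hlen, -, hhl, hnd, hch⟩ := hl
  replace hch : l.IsChain D.semiAdj := hch
  obtain ⟨x, y, t, rfl⟩ : ∃ x y t, l = x :: y :: t := by
    match l, hlen with
    | x :: y :: t, _ => exact ⟨x, y, t, rfl⟩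
  have hsne : y :: t ≠ [] := List.cons_ne_nil _ _
  have hlast : (y :: t).getLast hsne = x := by
    rw [List.head?_cons, List.getLast?_cons_cons, List.getLast?_eq_some_getLast hsne] at hhl
    exact (Option.some_inj.1 hhl).symm
  rw [List.dropLast_cons_of_ne_nil hsne, List.nodup_cons] at hnd
  have hsnd : (y :: t).Nodup := by
    rw [← List.dropLast_append_getLast hsne, hlast, List.nodup_append]
    simpa using ⟨hnd.2, fun a ha hax => hnd.1 (hax ▸ ha)⟩
  have hy : y ∈ (y :: t).dropLast := by
    obtain ⟨z, t, rfl⟩ : ∃ z t', t = z :: t' :=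
      List.exists_cons_of_ne_nil (by rintro rfl; simp at hlen)
    simp
  have hxy : D.graph.Adj x y :=
    graph_adj.2 ⟨fun h => hnd.1 (h ▸ hy), (List.isChain_cons_cons.1 hch).1⟩
  obtain ⟨p, hp⟩ : ∃ p : D.graph.Walk y x, p.support = y :: t :=
    ⟨(Walk.ofSupport _ hsne (isChain_graph_adj (List.isChain_cons_cons.1 hch).2 hsnd)).copy
      List.head_cons hlast, by rw [Walk.support_copy, Walk.support_ofSupport]⟩
  refine fun hA => hA (Walk.cons hxy p) (Walk.isCycle_iff_isPath_tail_and_le_length.2 ⟨?_, ?_⟩)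
  · rw [Walk.isPath_def, Walk.support_tail_of_not_nil _ Walk.not_nil_cons, Walk.support_cons,
      List.tail_cons, hp]
    exact hsnd
  · have := congrArg List.length hp
    simp only [Walk.length_support, List.length_cons] at this hlen
    simp only [Walk.length_cons]
    omega

theorem asemicyclic_iff (hV : ∀ e ∈ D.edges, e.1 ∈ D.verts ∧ e.2 ∈ D.verts) :
    D.Asemicyclic ↔ D.graph.IsAcyclic :=
  ⟨fun hA _ _ hc => hA _ (isSemicycle_support hV hc),
    fun hA _ hl => not_isAcyclic_of_isSemicycle hl hA⟩

def AgreeAt (D D' : DG) (x : ℕ) : Prop :=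
  x ∈ D.verts ∧ x ∈ D'.verts ∧ (∀ y, (y, x) ∈ D.edges ↔ (y, x) ∈ D'.edges) ∧
    ∀ y, (x, y) ∈ D.edges ↔ (x, y) ∈ D'.edges

namespace AgreeAt

theorem isWVert_iff (h : AgreeAt D D' x) : D.isWVert x ↔ D'.isWVert x := by
  simp only [isWVert, h.1, h.2.1, h.2.2.1]

theorem isEVert_iff (h : AgreeAt D D' x) : D.isEVert x ↔ D'.isEVert x := by
  simp only [isEVert, h.1, h.2.1, h.2.2.2]

theorem isWEdge_iff (h : AgreeAt D D' e.1) : D.isWEdge e ↔ D'.isWEdge e := by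
  obtain ⟨x, y⟩ := e
  simp only [isWEdge, h.isWVert_iff, h.2.2.2]

theorem isEEdge_iff (h : AgreeAt D D' e.2) : D.isEEdge e ↔ D'.isEEdge e := by
  obtain ⟨x, y⟩ := e
  simp only [isEEdge, h.isEVert_iff, h.2.2.1]

theorem funcWEdge_iff (h : AgreeAt D D' e.1) : D.funcWEdge e ↔ D'.funcWEdge e := by
  simp only [funcWEdge, h.isWEdge_iff, h.2.2.2]

theorem funcEEdge_iff (h : AgreeAt D D' e.2) : D.funcEEdge e ↔ D'.funcEEdge e := by
  simp only [funcEEdge, h.isEEdge_iff, h.2.2.1]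

theorem funcWEdge (h : AgreeAt D D' e.1) (hWE : D'.WEFunctional) (he : D.isWEdge e) :
    D.funcWEdge e :=
  h.funcWEdge_iff.2 (hWE.1 e (h.isWEdge_iff.1 he))

theorem funcEEdge (h : AgreeAt D D' e.2) (hWE : D'.WEFunctional) (he : D.isEEdge e) :
    D.funcEEdge e :=
  h.funcEEdge_iff.2 (hWE.2 e (h.isEEdge_iff.1 he))

end AgreeAt

theorem not_isInner_of_isWVert (h : D.isWVert x) : ¬ D.isInner x :=
  fun ⟨_, ⟨w, hw⟩, _⟩ => h.2 w hw

theorem not_isInner_of_isEVert (h : D.isEVert x) : ¬ D.isInner x :=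
  fun ⟨_, _, ⟨w, hw⟩⟩ => h.2 w hw

/-- The edges at a vertex that is not inner are all `W`-edges or all `E`-edges. -/
theorem eq_of_graph_adj_of_not_isInner (hWE : D.WEFunctional) (hxv : x ∈ D.verts)
    (hx : ¬ D.isInner x) (hy : D.graph.Adj x y) (hz : D.graph.Adj x z) : y = z := by
  have hy := (graph_adj.1 hy).2
  have hz := (graph_adj.1 hz).2
  by_cases hin : ∃ w, (w, x) ∈ D.edges
  · have hout : ∀ w, (x, w) ∉ D.edges := fun w hw => hx ⟨hxv, hin, w, hw⟩
    have hy := hy.resolve_left (hout y)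
    exact ((hWE.2 _ ⟨hy, hxv, hout⟩).2 z (hz.resolve_left (hout z))).symm
  · simp only [not_exists] at hin
    have hy := hy.resolve_right (hin y)
    exact ((hWE.1 _ ⟨hy, hxv, hin⟩).2 z (hz.resolve_right (hin z))).symm

end DG

open DG

theorem isQGraph_iff : IsQGraph D ↔ D.IsOriented ∧
    (∀ u ∈ D.verts, ∀ v ∈ D.verts, D.graph.Reachable u v) ∧ D.graph.IsAcyclic ∧
    D.WEFunctional ∧ ∃ a, D.isInner a :=
  and_congr_right fun hD => by rw [weaklyConnected_iff hD.1, asemicyclic_iff hD.1]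

/-- Such an edge would be a whole component without inner vertex. -/
theorem IsQGraph.not_isEVert_of_isWVert (hQ : IsQGraph D) (he : (u, v) ∈ D.edges)
    (hu : D.isWVert u) : ¬ D.isEVert v := by
  intro hv
  obtain ⟨hD, hC, -, hWE, q, hq⟩ := isQGraph_iff.1 hQ
  have huv : D.graph.Adj u v := graph_adj.2 ⟨hD.2.1 _ he, Or.inl he⟩
  have hu' := not_isInner_of_isWVert hu
  have hv' := not_isInner_of_isEVert hv
  have : q ∈ ({u, v} : Set ℕ) :=
    (hC u hu.1 q hq.1).mem_of_forall_adj_mem (fun x y hx hxy => ?_) (by simp)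
  · rcases this with rfl | rfl
    exacts [hu' hq, hv' hq]
  · rcases hx with rfl | rfl
    · exact Or.inr (eq_of_graph_adj_of_not_isInner hWE hu.1 hu' hxy huv)
    · exact Or.inl (eq_of_graph_adj_of_not_isInner hWE hv.1 hv' hxy huv.symm)

theorem IsQGraph.isInner_fst_of_isEEdge (hQ : IsQGraph D) (he : D.isEEdge e) :
    D.isInner e.1 := by
  refine ⟨(hQ.1.1 e he.1).1, ?_, e.2, he.1⟩
  by_contra! h
  exact hQ.not_isEVert_of_isWVert he.1 ⟨(hQ.1.1 e he.1).1, h⟩ he.2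

theorem IsQGraph.isInner_snd_of_isWEdge (hQ : IsQGraph D) (he : D.isWEdge e) :
    D.isInner e.2 := by
  refine ⟨(hQ.1.1 e he.1).2, ⟨e.1, he.1⟩, ?_⟩
  by_contra! h
  exact hQ.not_isEVert_of_isWVert he.1 he.2 ⟨(hQ.1.1 e he.1).2, h⟩

theorem IsQGraph.exists_isInner_edge (hQ : IsQGraph D) (hp : D.isInner p) (hq : D.isInner q)
    (hpq : p ≠ q) : ∃ e ∈ D.edges, D.isInner e.1 ∧ D.isInner e.2 := by
  obtain ⟨hD, hC, -, hWE, -⟩ := isQGraph_iff.1 hQ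
  by_contra! h
  have hnbr : ∀ y, D.graph.Adj p y → ¬ D.isInner y := fun y hy hy' => by
    rcases (graph_adj.1 hy).2 with h' | h'
    exacts [h _ h' hp hy', h _ h' hy' hp]
  -- otherwise `p` and its neighbours, which are not inner, would form a whole component
  have : q ∈ {x | x = p ∨ (¬ D.isInner x ∧ D.graph.Adj x p)} :=
    (hC p hp.1 q hq.1).mem_of_forall_adj_mem (fun x y hx hxy => ?_) (Or.inl rfl)
  · rcases this with h' | h'
    exacts [hpq h'.symm, h'.1 hq]
  · rcases hx with rfl | ⟨hx, hxp⟩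
    · exact Or.inr ⟨hnbr y hxy, hxy.symm⟩
    · exact Or.inl (eq_of_graph_adj_of_not_isInner hWE (mem_verts_of_graph_adj hD.1 hxy) hx
        hxy hxp)

theorem IsQGraph.isBasicQ_of_isInner_unique (hQ : IsQGraph D) (hb : D.isInner b)
    (huniq : ∀ x, D.isInner x → x = b) {i o : ℕ × ℕ} (hi : i ∈ D.edges) (hib : i.2 = b)
    (ho : o ∈ D.edges) (hob : o.1 = b) : IsBasicQ D (fun _ => pick i o) := by
  obtain ⟨hD, hC, -, -, -⟩ := isQGraph_iff.1 hQ
  have htouch : ∀ g ∈ D.edges, g.1 = b ∨ g.2 = b := by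
    intro g hg
    by_contra! h
    obtain ⟨hg1, hg2⟩ := hD.1 g hg
    refine hQ.not_isEVert_of_isWVert hg ⟨hg1, fun w hw => h.1 (huniq _ ⟨hg1, ⟨w, hw⟩, g.2, hg⟩)⟩
      ⟨hg2, fun w hw => h.2 (huniq _ ⟨hg2, ⟨g.1, hg⟩, w, hw⟩)⟩
  refine ⟨hD, b, hb.1, htouch, fun v hv => ?_, hb.2.1, hb.2.2, fun _ => ⟨hi, hib, ho, hob⟩⟩
  rcases ((reachable_iff_reflTransGen _ _).1 (hC b hb.1 v hv)).cases_tail with h | ⟨w, -, hwv⟩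
  · exact Or.inl h
  obtain ⟨-, h | h⟩ := graph_adj.1 hwv
  · rcases htouch _ h with h' | h'
    exacts [Or.inr (Or.inr (h' ▸ h)), Or.inl h']
  · rcases htouch _ h with h' | h'
    exacts [Or.inl h', Or.inr (Or.inl (h' ▸ h))]

theorem IsBasicQ.isQGraph (h : IsBasicQ D ε) : IsQGraph D := by
  obtain ⟨hD, b, hb, htouch, hadj, ⟨a, ha⟩, ⟨c, hc⟩, -⟩ := h
  have hreach : ∀ v ∈ D.verts, D.graph.Reachable b v := by
    intro v hv
    rcases hadj v hv with rfl | h | h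
    · rfl
    · exact (graph_adj.2 ⟨(hD.2.1 _ h).symm, Or.inr h⟩).reachable
    · exact (graph_adj.2 ⟨hD.2.1 _ h, Or.inl h⟩).reachable
  refine isQGraph_iff.2 ⟨hD, fun u hu v hv => (hreach u hu).symm.trans (hreach v hv),
    (isAcyclic_starGraph b).anti fun x y hxy => ?_, ⟨fun g hg => ⟨hg, fun y hy => ?_⟩,
    fun g hg => ⟨hg, fun y hy => ?_⟩⟩, b, hb, ⟨a, ha⟩, c, hc⟩
  · obtain ⟨hne, h | h⟩ := graph_adj.1 hxy
    exacts [starGraph_adj.2 ⟨hne, htouch _ h⟩, starGraph_adj.2 ⟨hne, (htouch _ h).symm⟩]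
  · have hg1 : g.1 ≠ b := fun h => hg.2.2 a (h ▸ ha)
    exact ((htouch _ hy).resolve_left hg1).trans ((htouch _ hg.1).resolve_left hg1).symm
  · have hg2 : g.2 ≠ b := fun h => hg.2.2 c (h ▸ hc)
    exact ((htouch _ hy).resolve_right hg2).trans ((htouch _ hg.1).resolve_right hg2).symm

/-! ### Cuts of Q-graphs -/

namespace DG

theorem mem_cut_verts :
    x ∈ (cut DW DE eW eE).verts ↔ (x ∈ DW.verts ∨ x ∈ DE.verts) ∧ ¬ (x = eW.2 ∨ x = eE.1) := by
  simp [cut]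

theorem mem_cut_edges : g ∈ (cut DW DE eW eE).edges ↔
    g = (eW.1, eE.2) ∨ (g ≠ eW ∧ g ∈ DW.edges) ∨ (g ≠ eE ∧ g ∈ DE.edges) := by
  simp [cut]

theorem cut_graph_le : (cut DW DE eW eE).graph ≤ DW.graph ⊔ DE.graph ⊔ edge eW.1 eE.2 := by
  intro x y hxy
  obtain ⟨hne, h⟩ := graph_adj.1 hxy
  simp only [sup_adj, edge_adj, graph_adj, semiAdj]
  rcases h with h | h <;> rcases mem_cut_edges.1 h with h | ⟨-, h⟩ | ⟨-, h⟩ <;> simp_all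

theorem cut_graph_adj_of_left (h : DW.graph.Adj x y) (hx : x ≠ eW.2) (hy : y ≠ eW.2) :
    (cut DW DE eW eE).graph.Adj x y := by
  obtain ⟨hne, h | h⟩ := graph_adj.1 h
  · exact graph_adj.2 ⟨hne, Or.inl (mem_cut_edges.2 (Or.inr (Or.inl
      ⟨fun h' => hy (by rw [← h']), h⟩)))⟩
  · exact graph_adj.2 ⟨hne, Or.inr (mem_cut_edges.2 (Or.inr (Or.inl
      ⟨fun h' => hx (by rw [← h']), h⟩)))⟩

theorem cut_graph_adj_of_right (h : DE.graph.Adj x y) (hx : x ≠ eE.1) (hy : y ≠ eE.1) :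
    (cut DW DE eW eE).graph.Adj x y := by
  obtain ⟨hne, h | h⟩ := graph_adj.1 h
  · exact graph_adj.2 ⟨hne, Or.inl (mem_cut_edges.2 (Or.inr (Or.inr
      ⟨fun h' => hx (by rw [← h']), h⟩)))⟩
  · exact graph_adj.2 ⟨hne, Or.inr (mem_cut_edges.2 (Or.inr (Or.inr
      ⟨fun h' => hy (by rw [← h']), h⟩)))⟩

theorem agreeAt_cut_left (hE : ∀ g ∈ DE.edges, g.1 ∈ DE.verts ∧ g.2 ∈ DE.verts)
    (hdisj : Disjoint DW.verts DE.verts) (heE : eE ∈ DE.edges) (hx : x ∈ DW.verts)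
    (hxa : x ≠ eW.1) (hxb : x ≠ eW.2) : AgreeAt (cut DW DE eW eE) DW x := by
  have hxE : x ∉ DE.verts := Finset.disjoint_left.1 hdisj hx
  have := hE eE heE
  refine ⟨mem_cut_verts.2 ⟨Or.inl hx, ?_⟩, hx, fun y => ?_, fun y => ?_⟩
  · grind
  · rw [mem_cut_edges]
    grind
  · rw [mem_cut_edges]
    grind

theorem agreeAt_cut_right (hW : ∀ g ∈ DW.edges, g.1 ∈ DW.verts ∧ g.2 ∈ DW.verts)
    (hdisj : Disjoint DW.verts DE.verts) (heW : eW ∈ DW.edges) (hx : x ∈ DE.verts)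
    (hxc : x ≠ eE.1) (hxd : x ≠ eE.2) : AgreeAt (cut DW DE eW eE) DE x := by
  have hxW : x ∉ DW.verts := Finset.disjoint_right.1 hdisj hx
  have := hW eW heW
  refine ⟨mem_cut_verts.2 ⟨Or.inr hx, ?_⟩, hx, fun y => ?_, fun y => ?_⟩
  · grind
  · rw [mem_cut_edges]
    grind
  · rw [mem_cut_edges]
    grind

theorem isOriented_cut (hDW : DW.IsOriented) (hDE : DE.IsOriented)
    (hdisj : Disjoint DW.verts DE.verts) (heW : DW.funcEEdge (a, b))
    (heE : DE.funcWEdge (c, d)) : (cut DW DE (a, b) (c, d)).IsOriented := by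
  have hsep : ∀ x ∈ DW.verts, x ∉ DE.verts := fun _ hx => Finset.disjoint_left.1 hdisj hx
  have hbout : ∀ y, (b, y) ∉ DW.edges := heW.1.2.2
  have hbin : ∀ x, (x, b) ∈ DW.edges → x = a := heW.2
  have hcin : ∀ x, (x, c) ∉ DE.edges := heE.1.2.2
  have hcout : ∀ y, (c, y) ∈ DE.edges → y = d := heE.2
  have := hDW.1 _ heW.1.1
  have := hDE.1 _ heE.1.1
  have := hDW.2.1 _ heW.1.1
  have := hDE.2.1 _ heE.1.1
  refine ⟨fun ⟨x, y⟩ hg => ?_, fun ⟨x, y⟩ hg => ?_, fun x y hxy hyx => ?_,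
    a, mem_cut_verts.2 (by grind)⟩
  · have := hDW.1 (x, y)
    have := hDE.1 (x, y)
    rw [mem_cut_edges] at hg
    rw [mem_cut_verts, mem_cut_verts]
    grind
  · have := hDW.2.1 (x, y)
    have := hDE.2.1 (x, y)
    rw [mem_cut_edges] at hg
    grind
  · have := hDW.1 (x, y)
    have := hDE.1 (x, y)
    have := hDW.1 (y, x)
    have := hDE.1 (y, x)
    have := hDW.2.2.1 x y
    have := hDE.2.2.1 x y
    rw [mem_cut_edges] at hxy hyx
    grind

end DG

theorem isInner_cut_fst (hQW : IsQGraph DW) (hDE : DE.IsOriented)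
    (hdisj : Disjoint DW.verts DE.verts) (heW : DW.funcEEdge (a, b)) (heE : (c, d) ∈ DE.edges) :
    (cut DW DE (a, b) (c, d)).isInner a := by
  obtain ⟨haW, ⟨z, hz⟩, -⟩ := hQW.isInner_fst_of_isEEdge heW.1
  have := hQW.1.2.1 _ heW.1.1
  have := hDE.1 _ heE
  have := Finset.disjoint_left.1 hdisj haW
  refine ⟨mem_cut_verts.2 ⟨Or.inl haW, ?_⟩, ⟨z, mem_cut_edges.2 (Or.inr (Or.inl ⟨?_, hz⟩))⟩,
    d, mem_cut_edges.2 (Or.inl rfl)⟩ <;> grind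

theorem isInner_cut_snd (hDW : DW.IsOriented) (hQE : IsQGraph DE)
    (hdisj : Disjoint DW.verts DE.verts) (heW : (a, b) ∈ DW.edges) (heE : DE.funcWEdge (c, d)) :
    (cut DW DE (a, b) (c, d)).isInner d := by
  obtain ⟨hdE, -, ⟨z, hz⟩⟩ := hQE.isInner_snd_of_isWEdge heE.1
  have := hQE.1.2.1 _ heE.1.1
  have := hDW.1 _ heW
  have := Finset.disjoint_right.1 hdisj hdE
  refine ⟨mem_cut_verts.2 ⟨Or.inr hdE, ?_⟩, ⟨a, mem_cut_edges.2 (Or.inl rfl)⟩,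
    ⟨z, mem_cut_edges.2 (Or.inr (Or.inr ⟨?_, hz⟩))⟩⟩ <;> grind

/-- Only `a` and `d` see edges of both sides. -/
theorem agreeAt_cut_of_not_isInner (hQW : IsQGraph DW) (hQE : IsQGraph DE)
    (hdisj : Disjoint DW.verts DE.verts) (heW : DW.funcEEdge (a, b)) (heE : DE.funcWEdge (c, d))
    (hx : x ∈ (cut DW DE (a, b) (c, d)).verts) (hxi : ¬ (cut DW DE (a, b) (c, d)).isInner x) :
    AgreeAt (cut DW DE (a, b) (c, d)) DW x ∨ AgreeAt (cut DW DE (a, b) (c, d)) DE x := by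
  have hxa : x ≠ a := by rintro rfl; exact hxi (isInner_cut_fst hQW hQE.1 hdisj heW heE.1.1)
  have hxd : x ≠ d := by rintro rfl; exact hxi (isInner_cut_snd hQW.1 hQE hdisj heW.1.1 heE)
  obtain ⟨hxW | hxE, hx'⟩ := mem_cut_verts.1 hx
  · exact Or.inl (agreeAt_cut_left hQE.1.1 hdisj heE.1.1 hxW hxa fun h => hx' (Or.inl h))
  · exact Or.inr (agreeAt_cut_right hQW.1.1 hdisj heW.1.1 hxE (fun h => hx' (Or.inr h)) hxd)

theorem reachable_cut (hQW : IsQGraph DW) (hQE : IsQGraph DE)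
    (hdisj : Disjoint DW.verts DE.verts) (heW : DW.funcEEdge (a, b)) (heE : DE.funcWEdge (c, d))
    (hx : x ∈ (cut DW DE (a, b) (c, d)).verts) : (cut DW DE (a, b) (c, d)).graph.Reachable a x := by
  obtain ⟨hDW, hCW, -⟩ := isQGraph_iff.1 hQW
  obtain ⟨hDE, hCE, -⟩ := isQGraph_iff.1 hQE
  have ha := (hDW.1 _ heW.1.1).1
  have hd := (hDE.1 _ heE.1.1).2
  obtain ⟨hxW | hxE, hx'⟩ := mem_cut_verts.1 hx
  · refine (hCW a ha x hxW).of_pendant (fun h => hx' (Or.inl h)) (fun y h => ?_)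
      fun x y hx hy h => cut_graph_adj_of_left h hx hy
    obtain ⟨-, h | h⟩ := graph_adj.1 h
    exacts [absurd h (heW.1.2.2 y), heW.2 y h]
  · have had : (cut DW DE (a, b) (c, d)).graph.Adj a d :=
      graph_adj.2 ⟨by rintro rfl; exact Finset.disjoint_left.1 hdisj ha hd,
        Or.inl (mem_cut_edges.2 (Or.inl rfl))⟩
    refine had.reachable.trans ((hCE d hd x hxE).of_pendant (fun h => hx' (Or.inr h))
      (fun y h => ?_) fun x y hx hy h => cut_graph_adj_of_right h hx hy)
    obtain ⟨-, h | h⟩ := graph_adj.1 h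
    exacts [heE.2 y h, absurd h (heE.1.2.2 y)]

theorem isAcyclic_cut (hQW : IsQGraph DW) (hQE : IsQGraph DE)
    (hdisj : Disjoint DW.verts DE.verts) (ha : a ∈ DW.verts) (hd : d ∈ DE.verts) :
    (cut DW DE (a, b) (c, d)).graph.IsAcyclic := by
  obtain ⟨hDW, -, hAW, -⟩ := isQGraph_iff.1 hQW
  obtain ⟨hDE, -, hAE, -⟩ := isQGraph_iff.1 hQE
  have hS₁ : ∀ x y, DW.graph.Adj x y → x ∈ (DW.verts : Set ℕ) :=
    fun _ _ h => mem_verts_of_graph_adj hDW.1 h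
  have hS₂ : ∀ x y, DE.graph.Adj x y → x ∉ (DW.verts : Set ℕ) :=
    fun _ _ h hx => Finset.disjoint_left.1 hdisj hx (mem_verts_of_graph_adj hDE.1 h)
  exact ((hAW.sup_of_separated hAE hS₁ hS₂).sup_edge_of_not_reachable
    (not_reachable_sup_of_separated hS₁ hS₂ ha fun h => Finset.disjoint_left.1 hdisj h hd)).anti
    cut_graph_le

theorem isQGraph_cut (hQW : IsQGraph DW) (hQE : IsQGraph DE)
    (hdisj : Disjoint DW.verts DE.verts) (heW : DW.funcEEdge (a, b)) (heE : DE.funcWEdge (c, d)) :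
    IsQGraph (cut DW DE (a, b) (c, d)) := by
  refine isQGraph_iff.2 ⟨isOriented_cut hQW.1 hQE.1 hdisj heW heE,
    fun u hu v hv => (reachable_cut hQW hQE hdisj heW heE hu).symm.trans
      (reachable_cut hQW hQE hdisj heW heE hv),
    isAcyclic_cut hQW hQE hdisj (hQW.1.1 _ heW.1.1).1 (hQE.1.1 _ heE.1.1).2,
    ⟨fun g hg => ?_, fun g hg => ?_⟩, a, isInner_cut_fst hQW hQE.1 hdisj heW heE.1.1⟩
  · rcases agreeAt_cut_of_not_isInner hQW hQE hdisj heW heE hg.2.1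
      (not_isInner_of_isWVert hg.2) with h | h
    exacts [h.funcWEdge hQW.2.2.2.1 hg, h.funcWEdge hQE.2.2.2.1 hg]
  · rcases agreeAt_cut_of_not_isInner hQW hQE hdisj heW heE hg.2.1
      (not_isInner_of_isEVert hg.2) with h | h
    exacts [h.funcEEdge hQW.2.2.2.1 hg, h.funcEEdge hQE.2.2.2.1 hg]

/-! ### Splitting a Q-graph at an inner edge -/

namespace DG

theorem ext : ∀ {D D' : DG}, D.verts = D'.verts → D.edges = D'.edges → D = D'
  | ⟨_, _⟩, ⟨_, _⟩, rfl, rfl => rfl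

def deleteEdge (D : DG) (e : ℕ × ℕ) : DG := ⟨D.verts, D.edges.erase e⟩

open scoped Classical in
noncomputable def component (D : DG) (x : ℕ) : Finset ℕ :=
  {v ∈ D.verts | D.graph.Reachable x v}

def induce (D : DG) (S : Finset ℕ) : DG := ⟨S, {g ∈ D.edges | g.1 ∈ S ∧ g.2 ∈ S}⟩

def addEdge (D : DG) (e : ℕ × ℕ) : DG :=
  ⟨insert e.1 (insert e.2 D.verts), insert e D.edges⟩

theorem mem_deleteEdge_edges : g ∈ (D.deleteEdge e).edges ↔ g ≠ e ∧ g ∈ D.edges :=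
  Finset.mem_erase

theorem mem_component : v ∈ D.component x ↔ v ∈ D.verts ∧ D.graph.Reachable x v := by
  simp [component]

theorem induce_verts : (D.induce S).verts = S := rfl

theorem mem_induce_edges : g ∈ (D.induce S).edges ↔ g ∈ D.edges ∧ g.1 ∈ S ∧ g.2 ∈ S := by
  simp [induce]

theorem mem_addEdge_verts : v ∈ (D.addEdge e).verts ↔ v = e.1 ∨ v = e.2 ∨ v ∈ D.verts := by
  simp [addEdge]

theorem mem_addEdge_edges : g ∈ (D.addEdge e).edges ↔ g = e ∨ g ∈ D.edges := by
  simp [addEdge]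

theorem deleteEdge_graph_le : (D.deleteEdge e).graph ≤ D.graph := fun _ _ h => by
  obtain ⟨hne, h | h⟩ := graph_adj.1 h
  exacts [graph_adj.2 ⟨hne, Or.inl (mem_deleteEdge_edges.1 h).2⟩,
    graph_adj.2 ⟨hne, Or.inr (mem_deleteEdge_edges.1 h).2⟩]

theorem graph_le_addEdge : D.graph ≤ (D.addEdge e).graph := fun _ _ h => by
  obtain ⟨hne, h | h⟩ := graph_adj.1 h
  exacts [graph_adj.2 ⟨hne, Or.inl (mem_addEdge_edges.2 (Or.inr h))⟩,
    graph_adj.2 ⟨hne, Or.inr (mem_addEdge_edges.2 (Or.inr h))⟩]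

theorem addEdge_induce_graph_le : ((D.induce S).addEdge e).graph ≤ D.graph ⊔ edge e.1 e.2 :=
  fun x y h => by
  obtain ⟨hne, h⟩ := graph_adj.1 h
  simp only [sup_adj, edge_adj, graph_adj, semiAdj]
  rcases h with h | h <;> rcases mem_addEdge_edges.1 h with rfl | h <;>
    simp_all [mem_induce_edges]

theorem mem_component_of_graph_adj (hV : ∀ e ∈ D.edges, e.1 ∈ D.verts ∧ e.2 ∈ D.verts)
    (hv : v ∈ D.component x) (h : D.graph.Adj v y) : y ∈ D.component x :=
  mem_component.2 ⟨mem_verts_of_graph_adj hV h.symm, (mem_component.1 hv).2.trans h.reachable⟩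

theorem graph_adj_deleteEdge (h : D.graph.Adj x y) (hxy : (x, y) ≠ e) (hyx : (y, x) ≠ e) :
    (D.deleteEdge e).graph.Adj x y := by
  obtain ⟨hne, h | h⟩ := graph_adj.1 h
  exacts [graph_adj.2 ⟨hne, Or.inl (mem_deleteEdge_edges.2 ⟨hxy, h⟩)⟩,
    graph_adj.2 ⟨hne, Or.inr (mem_deleteEdge_edges.2 ⟨hyx, h⟩)⟩]

theorem mem_component_deleteEdge_iff (hD : D.IsOriented) (hg : g ∈ D.edges) (hne : g ≠ e) :
    g.1 ∈ (D.deleteEdge e).component z ↔ g.2 ∈ (D.deleteEdge e).component z := by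
  have hV : ∀ g ∈ (D.deleteEdge e).edges, g.1 ∈ D.verts ∧ g.2 ∈ D.verts :=
    fun g hg => hD.1 g (mem_deleteEdge_edges.1 hg).2
  have hadj : (D.deleteEdge e).graph.Adj g.1 g.2 :=
    graph_adj.2 ⟨hD.2.1 g hg, Or.inl (mem_deleteEdge_edges.2 ⟨hne, hg⟩)⟩
  exact ⟨fun h => mem_component_of_graph_adj hV h hadj,
    fun h => mem_component_of_graph_adj hV h hadj.symm⟩

theorem mem_component_deleteEdge_of_semiAdj (hD : D.IsOriented)
    (hx : x ∈ (D.deleteEdge (a, d)).component z) (hxa : x ≠ a) (hxd : x ≠ d)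
    (h : D.semiAdj x y) : y ∈ (D.deleteEdge (a, d)).component z := by
  rcases h with h | h
  · exact (mem_component_deleteEdge_iff hD h fun h' => hxa (Prod.mk.inj h').1).1 hx
  · exact (mem_component_deleteEdge_iff hD h fun h' => hxd (Prod.mk.inj h').2).2 hx

theorem induce_component_reachable (hV : ∀ e ∈ D.edges, e.1 ∈ D.verts ∧ e.2 ∈ D.verts)
    (hv : v ∈ (D.deleteEdge e).component z) :
    (D.induce ((D.deleteEdge e).component z)).graph.Reachable z v := by
  have hV' : ∀ g ∈ (D.deleteEdge e).edges, g.1 ∈ D.verts ∧ g.2 ∈ D.verts :=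
    fun g hg => hV g (mem_deleteEdge_edges.1 hg).2
  refine (mem_component.1 hv).2.of_forall_adj fun x y hx hxy => ?_
  have hxS : x ∈ (D.deleteEdge e).component z :=
    mem_component.2 ⟨mem_verts_of_graph_adj hV' hxy, hx⟩
  have hyS := mem_component_of_graph_adj hV' hxS hxy
  obtain ⟨hne, h | h⟩ := graph_adj.1 hxy
  exacts [graph_adj.2 ⟨hne, Or.inl (mem_induce_edges.2 ⟨(mem_deleteEdge_edges.1 h).2, hxS, hyS⟩)⟩,
    graph_adj.2 ⟨hne, Or.inr (mem_induce_edges.2 ⟨(mem_deleteEdge_edges.1 h).2, hyS, hxS⟩)⟩]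

theorem isOriented_addEdge_induce (hD : D.IsOriented) (hS : S ⊆ D.verts) (hne : e.1 ≠ e.2)
    (hfresh : e.1 ∉ D.verts ∨ e.2 ∉ D.verts) : ((D.induce S).addEdge e).IsOriented := by
  refine ⟨fun ⟨x, y⟩ hg => ?_, fun ⟨x, y⟩ hg => ?_, fun x y hxy hyx => ?_,
    ⟨e.1, mem_addEdge_verts.2 (Or.inl rfl)⟩⟩
  · simp only [mem_addEdge_edges, mem_induce_edges] at hg
    simp only [mem_addEdge_verts, induce_verts]
    grind
  · simp only [mem_addEdge_edges, mem_induce_edges] at hg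
    have := hD.2.1 (x, y)
    grind
  · simp only [mem_addEdge_edges, mem_induce_edges] at hxy hyx
    have := hD.2.2.1 x y
    have := @hS x
    have := @hS y
    grind

theorem isAcyclic_addEdge_induce (hV : ∀ e ∈ D.edges, e.1 ∈ D.verts ∧ e.2 ∈ D.verts)
    (hA : D.graph.IsAcyclic) (hne : e.1 ≠ e.2) (hfresh : e.1 ∉ D.verts ∨ e.2 ∉ D.verts) :
    ((D.induce S).addEdge e).graph.IsAcyclic := by
  refine (hA.sup_edge_of_not_reachable fun h => ?_).anti addEdge_induce_graph_le
  rcases hfresh with h' | h'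
  exacts [hne (eq_of_reachable_of_not_mem_verts hV h' h).symm,
    hne (eq_of_reachable_of_not_mem_verts hV h' h.symm)]

theorem addEdge_induce_reachable (hS : ∀ v ∈ S, (D.induce S).graph.Reachable z v)
    (hne : e.1 ≠ e.2) (he : e.1 ∈ S ∨ e.2 ∈ S) (hv : v ∈ ((D.induce S).addEdge e).verts) :
    ((D.induce S).addEdge e).graph.Reachable z v := by
  have hS' : ∀ v ∈ S, ((D.induce S).addEdge e).graph.Reachable z v :=
    fun v hv => (hS v hv).mono graph_le_addEdge
  have he' : ((D.induce S).addEdge e).graph.Reachable e.1 e.2 :=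
    (graph_adj.2 ⟨hne, Or.inl (mem_addEdge_edges.2 (Or.inl rfl))⟩).reachable
  have h1 : ((D.induce S).addEdge e).graph.Reachable z e.1 := by
    rcases he with h | h
    exacts [hS' _ h, (hS' _ h).trans he'.symm]
  rcases mem_addEdge_verts.1 hv with rfl | rfl | hv
  exacts [h1, h1.trans he', hS' v hv]

theorem agreeAt_addEdge_induce (hxS : x ∈ S) (hxV : x ∈ D.verts) (hx1 : x ≠ e.1) (hx2 : x ≠ e.2)
    (hclosed : ∀ y, D.semiAdj x y → y ∈ S) : AgreeAt ((D.induce S).addEdge e) D x := by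
  refine ⟨mem_addEdge_verts.2 (Or.inr (Or.inr hxS)), hxV, fun y => ?_, fun y => ?_⟩
  · have := hclosed y
    simp only [mem_addEdge_edges, mem_induce_edges, semiAdj] at this ⊢
    grind
  · have := hclosed y
    simp only [mem_addEdge_edges, mem_induce_edges, semiAdj] at this ⊢
    grind

theorem card_addEdge_induce_lt (hS : S ⊆ D.verts) (he : e.1 ∈ S ∨ e.2 ∈ S) (hx : x ∈ D.verts)
    (hy : y ∈ D.verts) (hxS : x ∉ S) (hyS : y ∉ S) (hxy : x ≠ y) :
    ((D.induce S).addEdge e).verts.card < D.verts.card := by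
  have h₁ : (insert e.1 (insert e.2 S)).card ≤ S.card + 1 := by
    rcases he with h | h
    · rw [Finset.card_insert_of_mem (Finset.mem_insert_of_mem h)]
      exact Finset.card_insert_le _ _
    · rw [Finset.insert_eq_of_mem h]
      exact Finset.card_insert_le _ _
  have h₂ := Finset.card_le_card (s := insert x (insert y S)) (t := D.verts) fun v hv => by
    rcases Finset.mem_insert.1 hv with rfl | hv
    · exact hx
    rcases Finset.mem_insert.1 hv with rfl | hv
    exacts [hy, hS hv]
  rw [Finset.card_insert_of_notMem (by simp [hxy, hxS]), Finset.card_insert_of_notMem hyS] at h₂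
  exact lt_of_le_of_lt h₁ (by omega)

end DG

theorem IsQGraph.not_reachable_deleteEdge (hQ : IsQGraph D) (had : (a, d) ∈ D.edges) :
    ¬ (D.deleteEdge (a, d)).graph.Reachable a d := by
  obtain ⟨hD, -, hA, -⟩ := isQGraph_iff.1 hQ
  intro h
  have hle : (D.deleteEdge (a, d)).graph ⊔ edge a d ≤ D.graph :=
    sup_le deleteEdge_graph_le ((edge_le_iff _).2 (Or.inr (graph_adj.2 ⟨hD.2.1 _ had, Or.inl had⟩)))
  rcases (isAcyclic_sup_fromEdgeSet_iff.1 (hA.anti hle)).2 h with h' | h'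
  · exact hD.2.1 _ had h'
  · obtain ⟨-, h' | h'⟩ := graph_adj.1 h'
    · exact (mem_deleteEdge_edges.1 h').1 rfl
    · exact hD.2.2.1 a d had (mem_deleteEdge_edges.1 h').2

theorem IsQGraph.reachable_deleteEdge (hQ : IsQGraph D) (had : (a, d) ∈ D.edges)
    (hx : x ∈ D.verts) : (D.deleteEdge (a, d)).graph.Reachable a x ∨
      (D.deleteEdge (a, d)).graph.Reachable d x := by
  obtain ⟨hD, hC, -⟩ := isQGraph_iff.1 hQ
  refine (hC a (hD.1 _ had).1 x hx).mem_of_forall_adj_mem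
    (S := {y | _ ∨ _}) (fun u w hu huw => ?_) (Or.inl .rfl)
  by_cases h₁ : (u, w) = (a, d)
  · exact Or.inr (by rw [(Prod.mk.inj h₁).2])
  by_cases h₂ : (w, u) = (a, d)
  · exact Or.inl (by rw [(Prod.mk.inj h₂).1])
  have h := (graph_adj_deleteEdge huw h₁ h₂).reachable
  exact hu.imp (·.trans h) (·.trans h)

noncomputable def DG.westPiece (D : DG) (a d b : ℕ) : DG :=
  (D.induce ((D.deleteEdge (a, d)).component a)).addEdge (a, b)

noncomputable def DG.eastPiece (D : DG) (a d c : ℕ) : DG :=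
  (D.induce ((D.deleteEdge (a, d)).component d)).addEdge (c, d)

theorem IsQGraph.agreeAt_westPiece (hQ : IsQGraph D) (had : (a, d) ∈ D.edges)
    (hb : b ∉ D.verts) (hx : x ∈ (D.deleteEdge (a, d)).component a) (hxa : x ≠ a) :
    AgreeAt (D.westPiece a d b) D x := by
  have hxV := (mem_component.1 hx).1
  have hxd : x ≠ d := by
    rintro rfl
    exact hQ.not_reachable_deleteEdge had (mem_component.1 hx).2
  exact agreeAt_addEdge_induce hx hxV hxa (by rintro rfl; exact hb hxV)
    fun _ => mem_component_deleteEdge_of_semiAdj hQ.1 hx hxa hxd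

theorem IsQGraph.agreeAt_eastPiece (hQ : IsQGraph D) (had : (a, d) ∈ D.edges)
    (hc : c ∉ D.verts) (hx : x ∈ (D.deleteEdge (a, d)).component d) (hxd : x ≠ d) :
    AgreeAt (D.eastPiece a d c) D x := by
  have hxV := (mem_component.1 hx).1
  have hxa : x ≠ a := by
    rintro rfl
    exact hQ.not_reachable_deleteEdge had (mem_component.1 hx).2.symm
  exact agreeAt_addEdge_induce hx hxV (by rintro rfl; exact hc hxV) hxd
    fun _ => mem_component_deleteEdge_of_semiAdj hQ.1 hx hxa hxd

theorem IsQGraph.isQGraph_westPiece (hQ : IsQGraph D) (had : (a, d) ∈ D.edges)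
    (ha : D.isInner a) (hb : b ∉ D.verts) : IsQGraph (D.westPiece a d b) := by
  obtain ⟨hD, -, hA, hWE, -⟩ := isQGraph_iff.1 hQ
  set S := (D.deleteEdge (a, d)).component a
  have haS : a ∈ S := mem_component.2 ⟨ha.1, .rfl⟩
  have hab : a ≠ b := by rintro rfl; exact hb ha.1
  have hbS : b ∉ S := fun h => hb (mem_component.1 h).1
  have habP : (a, b) ∈ (D.westPiece a d b).edges := mem_addEdge_edges.2 (Or.inl rfl)
  obtain ⟨z, hz⟩ := ha.2.1
  have hzP : (z, a) ∈ (D.westPiece a d b).edges := by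
    refine mem_addEdge_edges.2 (Or.inr (mem_induce_edges.2 ⟨hz, ?_, haS⟩))
    exact (mem_component_deleteEdge_iff hD hz fun h => hD.2.1 _ had (Prod.mk.inj h).2).2 haS
  refine isQGraph_iff.2 ⟨isOriented_addEdge_induce hD (fun x hx => (mem_component.1 hx).1) hab
      (Or.inr hb), fun u hu v hv => ?_, isAcyclic_addEdge_induce hD.1 hA hab (Or.inr hb),
    ⟨fun g hg => ?_, fun g hg => ?_⟩, a, mem_addEdge_verts.2 (Or.inl rfl), ⟨z, hzP⟩, b, habP⟩
  · have hreach := fun v hv => addEdge_induce_reachable (e := (a, b))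
      (fun v hv => induce_component_reachable hD.1 hv) hab (Or.inl haS) (z := a) (v := v) hv
    exact (hreach u hu).symm.trans (hreach v hv)
  · have hga : g.1 ≠ a := by rintro h; exact hg.2.2 z (h ▸ hzP)
    rcases mem_addEdge_edges.1 hg.1 with rfl | hgD
    · exact absurd rfl hga
    exact (hQ.agreeAt_westPiece had hb (mem_induce_edges.1 hgD).2.1 hga).funcWEdge hWE hg
  · rcases mem_addEdge_edges.1 hg.1 with rfl | hgD
    · refine ⟨hg, fun y hy => ?_⟩
      rcases mem_addEdge_edges.1 hy with h | h
      exacts [(Prod.mk.inj h).1, absurd (mem_induce_edges.1 h).2.2 hbS]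
    have hga : g.2 ≠ a := by rintro h; exact hg.2.2 b (h ▸ habP)
    exact (hQ.agreeAt_westPiece had hb (mem_induce_edges.1 hgD).2.2 hga).funcEEdge hWE hg

theorem IsQGraph.isQGraph_eastPiece (hQ : IsQGraph D) (had : (a, d) ∈ D.edges)
    (hd : D.isInner d) (hc : c ∉ D.verts) : IsQGraph (D.eastPiece a d c) := by
  obtain ⟨hD, -, hA, hWE, -⟩ := isQGraph_iff.1 hQ
  set S := (D.deleteEdge (a, d)).component d
  have hdS : d ∈ S := mem_component.2 ⟨hd.1, .rfl⟩
  have hcd : c ≠ d := by rintro rfl; exact hc hd.1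
  have hcS : c ∉ S := fun h => hc (mem_component.1 h).1
  have hcdP : (c, d) ∈ (D.eastPiece a d c).edges := mem_addEdge_edges.2 (Or.inl rfl)
  obtain ⟨z, hz⟩ := hd.2.2
  have hzP : (d, z) ∈ (D.eastPiece a d c).edges := by
    refine mem_addEdge_edges.2 (Or.inr (mem_induce_edges.2 ⟨hz, hdS, ?_⟩))
    exact (mem_component_deleteEdge_iff hD hz fun h => hD.2.1 _ had (Prod.mk.inj h).1.symm).1 hdS
  refine isQGraph_iff.2 ⟨isOriented_addEdge_induce hD (fun x hx => (mem_component.1 hx).1) hcd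
      (Or.inl hc), fun u hu v hv => ?_, isAcyclic_addEdge_induce hD.1 hA hcd (Or.inl hc),
    ⟨fun g hg => ?_, fun g hg => ?_⟩, d, mem_addEdge_verts.2 (Or.inr (Or.inl rfl)), ⟨c, hcdP⟩,
    z, hzP⟩
  · have hreach := fun v hv => addEdge_induce_reachable (e := (c, d))
      (fun v hv => induce_component_reachable hD.1 hv) hcd (Or.inr hdS) (z := d) (v := v) hv
    exact (hreach u hu).symm.trans (hreach v hv)
  · rcases mem_addEdge_edges.1 hg.1 with rfl | hgD
    · refine ⟨hg, fun y hy => ?_⟩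
      rcases mem_addEdge_edges.1 hy with h | h
      exacts [(Prod.mk.inj h).2, absurd (mem_induce_edges.1 h).2.1 hcS]
    have hgd : g.1 ≠ d := by rintro h; exact hg.2.2 c (h ▸ hcdP)
    exact (hQ.agreeAt_eastPiece had hc (mem_induce_edges.1 hgD).2.1 hgd).funcWEdge hWE hg
  · have hgd : g.2 ≠ d := by rintro h; exact hg.2.2 z (h ▸ hzP)
    rcases mem_addEdge_edges.1 hg.1 with rfl | hgD
    · exact absurd rfl hgd
    exact (hQ.agreeAt_eastPiece had hc (mem_induce_edges.1 hgD).2.2 hgd).funcEEdge hWE hg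

theorem funcEEdge_westPiece (hD : D.IsOriented) (had : (a, d) ∈ D.edges) (hb : b ∉ D.verts) :
    (D.westPiece a d b).funcEEdge (a, b) := by
  have hbS : b ∉ (D.deleteEdge (a, d)).component a := fun h => hb (mem_component.1 h).1
  have hab : a ≠ b := by rintro rfl; exact hb (hD.1 _ had).1
  refine ⟨⟨mem_addEdge_edges.2 (Or.inl rfl), mem_addEdge_verts.2 (Or.inr (Or.inl rfl)),
    fun y hy => ?_⟩, fun y hy => ?_⟩ <;> rcases mem_addEdge_edges.1 hy with h | h
  · exact hab (Prod.mk.inj h).1.symm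
  · exact hbS (mem_induce_edges.1 h).2.1
  · exact (Prod.mk.inj h).1
  · exact absurd (mem_induce_edges.1 h).2.2 hbS

theorem funcWEdge_eastPiece (hD : D.IsOriented) (had : (a, d) ∈ D.edges) (hc : c ∉ D.verts) :
    (D.eastPiece a d c).funcWEdge (c, d) := by
  have hcS : c ∉ (D.deleteEdge (a, d)).component d := fun h => hc (mem_component.1 h).1
  have hcd : c ≠ d := by rintro rfl; exact hc (hD.1 _ had).2
  refine ⟨⟨mem_addEdge_edges.2 (Or.inl rfl), mem_addEdge_verts.2 (Or.inl rfl),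
    fun y hy => ?_⟩, fun y hy => ?_⟩ <;> rcases mem_addEdge_edges.1 hy with h | h
  · exact hcd (Prod.mk.inj h).2
  · exact hcS (mem_induce_edges.1 h).2.2
  · exact (Prod.mk.inj h).2
  · exact absurd (mem_induce_edges.1 h).2.1 hcS

theorem IsQGraph.card_westPiece_lt (hQ : IsQGraph D) (had : (a, d) ∈ D.edges)
    (hd : D.isInner d) : (D.westPiece a d b).verts.card < D.verts.card := by
  have hdS : d ∉ (D.deleteEdge (a, d)).component a := fun h =>
    hQ.not_reachable_deleteEdge had (mem_component.1 h).2
  obtain ⟨z, hz⟩ := hd.2.2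
  have hzS := (mem_component_deleteEdge_iff hQ.1 hz fun h =>
    hQ.1.2.1 _ had (Prod.mk.inj h).1.symm).not.1 hdS
  exact card_addEdge_induce_lt (fun x hx => (mem_component.1 hx).1)
    (Or.inl (mem_component.2 ⟨(hQ.1.1 _ had).1, .rfl⟩)) hd.1 (hQ.1.1 _ hz).2 hdS hzS
    (hQ.1.2.1 _ hz)

theorem IsQGraph.card_eastPiece_lt (hQ : IsQGraph D) (had : (a, d) ∈ D.edges)
    (ha : D.isInner a) : (D.eastPiece a d c).verts.card < D.verts.card := by
  have haS : a ∉ (D.deleteEdge (a, d)).component d := fun h =>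
    hQ.not_reachable_deleteEdge had (mem_component.1 h).2.symm
  obtain ⟨z, hz⟩ := ha.2.1
  have hzS := (mem_component_deleteEdge_iff hQ.1 hz fun h =>
    hQ.1.2.1 _ had (Prod.mk.inj h).2).not.2 haS
  exact card_addEdge_induce_lt (fun x hx => (mem_component.1 hx).1)
    (Or.inr (mem_component.2 ⟨(hQ.1.1 _ had).2, .rfl⟩)) ha.1 (hQ.1.1 _ hz).1 haS hzS
    (hQ.1.2.1 _ hz).symm

theorem IsQGraph.disjoint_component_deleteEdge (hQ : IsQGraph D) (had : (a, d) ∈ D.edges) :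
    Disjoint ((D.deleteEdge (a, d)).component a) ((D.deleteEdge (a, d)).component d) :=
  Finset.disjoint_left.2 fun _ hxa hxd => hQ.not_reachable_deleteEdge had
    ((mem_component.1 hxa).2.trans (mem_component.1 hxd).2.symm)

theorem IsQGraph.disjoint_westPiece_eastPiece (hQ : IsQGraph D) (had : (a, d) ∈ D.edges)
    (hb : b ∉ D.verts) (hc : c ∉ D.verts) (hbc : b ≠ c) :
    Disjoint (D.westPiece a d b).verts (D.eastPiece a d c).verts := by
  have hdisj := Finset.disjoint_left.1 (hQ.disjoint_component_deleteEdge had)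
  have haS : a ∈ (D.deleteEdge (a, d)).component a := mem_component.2 ⟨(hQ.1.1 _ had).1, .rfl⟩
  have hdS : d ∈ (D.deleteEdge (a, d)).component d := mem_component.2 ⟨(hQ.1.1 _ had).2, .rfl⟩
  have hbS : b ∉ (D.deleteEdge (a, d)).component d := fun h => hb (mem_component.1 h).1
  have hcS : c ∉ (D.deleteEdge (a, d)).component a := fun h => hc (mem_component.1 h).1
  refine Finset.disjoint_left.2 fun x hxW hxE => ?_
  simp only [westPiece, eastPiece, mem_addEdge_verts, induce_verts] at hxW hxE
  grind

theorem IsQGraph.cut_westPiece_eastPiece (hQ : IsQGraph D) (had : (a, d) ∈ D.edges)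
    (hb : b ∉ D.verts) (hc : c ∉ D.verts) :
    cut (D.westPiece a d b) (D.eastPiece a d c) (a, b) (c, d) = D := by
  have hdisj := Finset.disjoint_left.1 (hQ.disjoint_component_deleteEdge had)
  have haS : a ∈ (D.deleteEdge (a, d)).component a := mem_component.2 ⟨(hQ.1.1 _ had).1, .rfl⟩
  have hdS : d ∈ (D.deleteEdge (a, d)).component d := mem_component.2 ⟨(hQ.1.1 _ had).2, .rfl⟩
  have hcover : ∀ x ∈ D.verts, x ∈ (D.deleteEdge (a, d)).component a ∨
      x ∈ (D.deleteEdge (a, d)).component d := fun x hx =>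
    (hQ.reachable_deleteEdge had hx).imp (fun h => mem_component.2 ⟨hx, h⟩)
      (fun h => mem_component.2 ⟨hx, h⟩)
  have hV : ∀ x z, x ∈ (D.deleteEdge (a, d)).component z → x ∈ D.verts :=
    fun _ _ h => (mem_component.1 h).1
  refine DG.ext (Finset.ext fun x => ?_) (Finset.ext fun g => ?_)
  · simp only [mem_cut_verts, westPiece, eastPiece, mem_addEdge_verts, induce_verts]
    have := hcover x
    have := hV x a
    have := hV x d
    grind
  · simp only [mem_cut_edges, westPiece, eastPiece, mem_addEdge_edges, mem_induce_edges]
    have hside : g ∈ D.edges → g ≠ (a, d) → ∀ z,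
        (g.1 ∈ (D.deleteEdge (a, d)).component z ↔ g.2 ∈ (D.deleteEdge (a, d)).component z) :=
      fun hg hne _ => mem_component_deleteEdge_iff hQ.1 hg hne
    have := hcover g.1
    have := hQ.1.1 g
    have := hV g.2 a
    have := hV g.1 d
    grind

/-! ### Constructions -/

def HasConstructionQ (D : DG) (P : DistE → Prop) : Prop :=
  ∃ G : CTree, IsConstructionQ G ∧ G.rootGraph = D ∧ P G.dist

def Constructible (D : DG) : Prop :=
  HasConstructionQ D (fun _ => True) ∧
    (∀ e, D.funcEEdge e → HasConstructionQ D fun ε => ∀ Y, ε Y .E = e) ∧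
    (∀ w, D.funcWEdge w → HasConstructionQ D fun ε => ∀ Y, ε Y .W = w)

theorem IsConstructionQ.isQGraph {G : CTree} (h : IsConstructionQ G) : IsQGraph G.rootGraph := by
  induction h with
  | leaf D ε hB => exact hB.isQGraph
  | node D ε eW eE GW GE _ _ hdisj heW heE hD _ _ _ ihW ihE =>
    exact hD ▸ isQGraph_cut ihW ihE hdisj heW heE

theorem IsQGraph.constructible_of_isInner_unique (hQ : IsQGraph D) (hb : D.isInner b)
    (huniq : ∀ x, D.isInner x → x = b) : Constructible D := by
  obtain ⟨i, hi⟩ := hb.2.1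
  obtain ⟨o, ho⟩ := hb.2.2
  refine ⟨⟨.leaf D fun _ => pick (i, b) (b, o), .leaf _ _
      (hQ.isBasicQ_of_isInner_unique hb huniq hi rfl ho rfl), rfl, trivial⟩,
    fun e he => ⟨.leaf D fun _ => pick (i, b) e, .leaf _ _ ?_, rfl, fun _ => rfl⟩,
    fun w hw => ⟨.leaf D fun _ => pick w (b, o), .leaf _ _ ?_, rfl, fun _ => rfl⟩⟩
  · exact hQ.isBasicQ_of_isInner_unique hb huniq hi rfl he.1.1
      (huniq _ (hQ.isInner_fst_of_isEEdge he.1))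
  · exact hQ.isBasicQ_of_isInner_unique hb huniq hw.1.1
      (huniq _ (hQ.isInner_snd_of_isWEdge hw.1)) ho rfl

theorem hasConstructionQ_cut {DW DE : DG} {GW GE : CTree} {P : DistE → Prop}
    (hdisj : Disjoint DW.verts DE.verts) (heW : DW.funcEEdge (a, b)) (heE : DE.funcWEdge (c, d))
    (hGW : IsConstructionQ GW) (hGWr : GW.rootGraph = DW) (hGE : IsConstructionQ GE)
    (hGEr : GE.rootGraph = DE) (hXYC : ∀ Y, (a, b) = GW.dist Y .E ∨ (c, d) = GE.dist Y .W)
    (hP : P (mkNode GW GE (a, b) (c, d)).dist) : HasConstructionQ (cut DW DE (a, b) (c, d)) P := by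
  subst hGWr hGEr
  exact ⟨_, .node _ _ _ _ _ _ hGW hGE hdisj heW heE rfl hXYC (fun _ => rfl) (fun _ => rfl), rfl, hP⟩

theorem Constructible.cut {DW DE : DG} (hQW : IsQGraph DW) (hQE : IsQGraph DE)
    (hdisj : Disjoint DW.verts DE.verts) (heW : DW.funcEEdge (a, b)) (heE : DE.funcWEdge (c, d))
    (hW : Constructible DW) (hE : Constructible DE) :
    Constructible (DG.cut DW DE (a, b) (c, d)) := by
  obtain ⟨-, hWE, hWW⟩ := hW
  obtain ⟨-, hEE, hEW⟩ := hE
  obtain ⟨GWab, hGWab, hGWabr, hGWabd⟩ := hWE _ heW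
  obtain ⟨GEcd, hGEcd, hGEcdr, hGEcdd⟩ := hEW _ heE
  refine ⟨hasConstructionQ_cut (P := fun _ => True) hdisj heW heE hGWab hGWabr hGEcd hGEcdr
    (fun Y => Or.inl (hGWabd Y).symm) trivial, fun e he => ?_, fun w hw => ?_⟩
  · rcases agreeAt_cut_of_not_isInner hQW hQE hdisj heW heE he.1.2.1
      (not_isInner_of_isEVert he.1.2) with h | h
    · obtain ⟨GW, hGW, hGWr, hGWd⟩ := hWE e (h.funcEEdge_iff.1 he)
      refine hasConstructionQ_cut hdisj heW heE hGW hGWr hGEcd hGEcdr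
        (fun Y => Or.inr (hGEcdd Y).symm) fun Y => ?_
      have hne : (a, b) ≠ e := fun h' => (mem_cut_verts.1 h.1).2 (Or.inl (by rw [← h']))
      show (if (a, b) = GW.dist Y .E then _ else _) = e
      rw [hGWd Y, if_neg hne]
    · obtain ⟨GE, hGE, hGEr, hGEd⟩ := hEE e (h.funcEEdge_iff.1 he)
      refine hasConstructionQ_cut hdisj heW heE hGWab hGWabr hGE hGEr
        (fun Y => Or.inl (hGWabd Y).symm) fun Y => ?_
      show (if (a, b) = GWab.dist Y .E then _ else _) = e
      rw [if_pos (hGWabd Y).symm, hGEd Y]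
  · rcases agreeAt_cut_of_not_isInner hQW hQE hdisj heW heE hw.1.2.1
      (not_isInner_of_isWVert hw.1.2) with h | h
    · obtain ⟨GW, hGW, hGWr, hGWd⟩ := hWW w (h.funcWEdge_iff.1 hw)
      refine hasConstructionQ_cut hdisj heW heE hGW hGWr hGEcd hGEcdr
        (fun Y => Or.inr (hGEcdd Y).symm) fun Y => ?_
      show (if (c, d) = GEcd.dist Y .W then _ else _) = w
      rw [if_pos (hGEcdd Y).symm, hGWd Y]
    · obtain ⟨GE, hGE, hGEr, hGEd⟩ := hEW w (h.funcWEdge_iff.1 hw)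
      refine hasConstructionQ_cut hdisj heW heE hGWab hGWabr hGE hGEr
        (fun Y => Or.inl (hGWabd Y).symm) fun Y => ?_
      have hne : (c, d) ≠ w := fun h' => (mem_cut_verts.1 h.1).2 (Or.inr (by rw [← h']))
      show (if (c, d) = GE.dist Y .W then _ else _) = w
      rw [hGEd Y, if_neg hne]

theorem IsQGraph.constructible (hQ : IsQGraph D) : Constructible D := by
  induction hn : D.verts.card using Nat.strong_induction_on generalizing D with
  | _ n ih =>
  by_cases hsplit : ∃ p q, D.isInner p ∧ D.isInner q ∧ p ≠ q
  · obtain ⟨p, q, hp, hq, hpq⟩ := hsplit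
    obtain ⟨⟨a, d⟩, had, ha, hd⟩ := hQ.exists_isInner_edge hp hq hpq
    obtain ⟨b, hb⟩ := Infinite.exists_notMem_finset D.verts
    obtain ⟨c, hc⟩ := Infinite.exists_notMem_finset (insert b D.verts)
    rw [Finset.mem_insert, not_or] at hc
    have hQW := hQ.isQGraph_westPiece had ha hb
    have hQE := hQ.isQGraph_eastPiece had hd hc.2
    rw [← hQ.cut_westPiece_eastPiece had hb hc.2]
    exact Constructible.cut hQW hQE (hQ.disjoint_westPiece_eastPiece had hb hc.2 (Ne.symm hc.1))
      (funcEEdge_westPiece hQ.1 had hb) (funcWEdge_eastPiece hQ.1 had hc.2)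
      (ih _ (hn ▸ hQ.card_westPiece_lt had hd) hQW rfl)
      (ih _ (hn ▸ hQ.card_eastPiece_lt had ha) hQE rfl)
  · obtain ⟨b, hb⟩ := hQ.2.2.2.2
    exact hQ.constructible_of_isInner_unique hb fun x hx =>
      by_contra fun h => hsplit ⟨x, b, hx, hb, h⟩

theorem Q_iff_globalQ_general (D : DG) :
    IsQGraph D ↔ ∃ G : CTree, IsConstructionQ G ∧ G.rootGraph = D :=
  ⟨fun hQ => let ⟨G, hG, hD, _⟩ := hQ.constructible.1; ⟨G, hG, hD⟩,
    fun ⟨_, hG, hD⟩ => hD ▸ hG.isQGraph⟩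

/-- An oriented graph is a Q-graph iff it is a global Q-graph. -/
theorem Q_iff_globalQ (D : DG) (hD : D.IsOriented) :
    IsQGraph D ↔ ∃ G : CTree, IsConstructionQ G ∧ G.rootGraph = D :=
  Q_iff_globalQ_general D

end PluralCuts
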